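/- Let (X, p) be a pointed set and define an equivalence relation on the free rack F(X) × X by (g, x) ∼ (h, y) iff x = y = p and g⁻¹h is a power of p. Then the rack operation (g,x) ▷ (h,y) = (gxg⁻¹h, y) descends to the quotient, the class [e, p] satisfies [e,p] ▷ [e,p] = [e,p], and the quotient with base-point [e,p] is the free pointed rack on (X, p): every base-point preserving map from (X,p) to a pointed rack (R, q) (where q ▷ q = q) extends uniquely to a base-point preserving rack morphism from the quotient. -/

import Mathlib

/-!
The free group `F(X)` acts on any rack `R` through the permutations `r ↦ f x ▷ r`, and by
self-distributivity it acts by rack automorphisms; hence `(g, x) ↦ g · f x` is a rack morphism out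
of the free rack, and it is the only one extending `f`, since `(1, x) ▷ (h, y) = (x h, y)`.
Modulo `pointedRel p` the rack operation is well defined because `p` commutes with its own powers,
and the lift is well defined because `f p ▷ f p = f p` makes every power of `p` fix `f p`.
-/

/-- The relation identifying `(g, p)` with `(h, p)` when `g⁻¹h` is a power
of `p`, on the free rack `F(X) × X`. -/
def pointedRel {X : Type*} (p : X) (a b : FreeGroup X × X) : Prop :=
  a.2 = p ∧ b.2 = p ∧ ∃ n : ℤ, a.1⁻¹ * b.1 = (FreeGroup.of p) ^ n

open Function

section FreeRack

variable {X R : Type*}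

def freeRackOp (a b : FreeGroup X × X) : FreeGroup X × X :=
  (a.1 * FreeGroup.of a.2 * a.1⁻¹ * b.1, b.2)

def opAutSubgroup (op : R → R → R) : Subgroup (Equiv.Perm R) where
  carrier := {σ | ∀ s t, σ (op s t) = op (σ s) (σ t)}
  one_mem' _ _ := rfl
  mul_mem' {σ τ} (hσ : ∀ s t, _) (hτ : ∀ s t, _) s t := (congrArg σ (hτ s t)).trans (hσ _ _)
  inv_mem' {σ} (hσ : ∀ s t, _) s t := σ.injective <| by
    rw [hσ]; simp only [Equiv.Perm.coe_inv, Equiv.apply_symm_apply]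

variable (op : R → R → R) (hbij : ∀ r, Bijective (op r)) (f : X → R)

noncomputable def freeAct : FreeGroup X →* Equiv.Perm R :=
  FreeGroup.lift fun x => Equiv.ofBijective (op (f x)) (hbij (f x))

lemma freeAct_of (x : X) (r : R) : freeAct op hbij f (FreeGroup.of x) r = op (f x) r := by
  simp [freeAct]

lemma freeAct_op (hdist : ∀ r s t, op r (op s t) = op (op r s) (op r t))
    (g : FreeGroup X) (s t : R) :
    freeAct op hbij f g (op s t) = op (freeAct op hbij f g s) (freeAct op hbij f g t) :=
  FreeGroup.range_lift_le (s := opAutSubgroup op) (by rintro _ ⟨x, rfl⟩; exact hdist (f x))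
    ⟨g, rfl⟩ s t

noncomputable def freeRackLift (a : FreeGroup X × X) : R :=
  freeAct op hbij f a.1 (f a.2)

lemma freeRackLift_freeRackOp (hdist : ∀ r s t, op r (op s t) = op (op r s) (op r t))
    (a b : FreeGroup X × X) :
    freeRackLift op hbij f (freeRackOp a b) =
      op (freeRackLift op hbij f a) (freeRackLift op hbij f b) := by
  simp only [freeRackLift, freeRackOp, map_mul, map_inv, Equiv.Perm.mul_apply, freeAct_of,
    freeAct_op op hbij f hdist, Equiv.Perm.coe_inv, Equiv.apply_symm_apply]

lemma freeRackLift_unique (φ : FreeGroup X × X → R)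
    (hφ : ∀ a b, φ (freeRackOp a b) = op (φ a) (φ b)) (hgen : ∀ x, φ (1, x) = f x) :
    φ = freeRackLift op hbij f := by
  have translate : ∀ g : FreeGroup X, ∀ b : FreeGroup X × X,
      φ (g * b.1, b.2) = freeAct op hbij f g (φ b) := by
    intro g
    induction g using FreeGroup.induction_on with
    | C1 => simp
    | of x =>
      intro b
      simpa [freeRackOp, hgen, freeAct_of] using hφ (1, x) b
    | inv_of x ih =>
      intro b
      rw [map_inv, Equiv.Perm.eq_inv_iff_eq, ← ih]
      simp
    | mul g h ihg ihh =>
      intro b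
      rw [map_mul, Equiv.Perm.mul_apply, ← ihh b, mul_assoc]
      exact ihg (h * b.1, b.2)
  funext a
  simpa [hgen, freeRackLift] using translate a.1 (1, a.2)

end FreeRack

section PointedRack

variable {X : Type*} {p : X}

lemma pointedRel.freeRackOp_left {a a' : FreeGroup X × X} (h : pointedRel p a a')
    (b : FreeGroup X × X) : freeRackOp a b = freeRackOp a' b := by
  obtain ⟨ha, ha', n, hn⟩ := h
  have hg : a'.1 = a.1 * FreeGroup.of p ^ n := by rw [← hn]; group
  simp only [freeRackOp, ha, ha', hg]
  group

lemma pointedRel.freeRackOp_right (a : FreeGroup X × X) {b b' : FreeGroup X × X}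
    (h : pointedRel p b b') : pointedRel p (freeRackOp a b) (freeRackOp a b') := by
  obtain ⟨hb, hb', n, hn⟩ := h
  exact ⟨hb, hb', n, by simp only [freeRackOp]; rw [← hn]; group⟩

variable (p) in
def pointedRackOp : Quot (pointedRel p) → Quot (pointedRel p) → Quot (pointedRel p) :=
  Quot.lift₂ (fun a b => Quot.mk _ (freeRackOp a b))
    (fun a _ _ h => Quot.sound (h.freeRackOp_right a))
    (fun _ _ b h => congrArg _ (h.freeRackOp_left b))

variable (p) in
lemma pointedRackOp_basepoint :
    pointedRackOp p (Quot.mk _ (1, p)) (Quot.mk _ (1, p)) = Quot.mk _ (1, p) :=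
  Quot.sound ⟨rfl, rfl, -1, by simp [freeRackOp]⟩

lemma freeRackLift_eq_of_pointedRel {R : Type*} (op : R → R → R)
    (hbij : ∀ r, Bijective (op r)) (f : X → R) (hfix : op (f p) (f p) = f p)
    {a b : FreeGroup X × X} (h : pointedRel p a b) :
    freeRackLift op hbij f a = freeRackLift op hbij f b := by
  obtain ⟨ha, hb, n, hn⟩ := h
  have hg : b.1 = a.1 * FreeGroup.of p ^ n := by rw [← hn]; group
  simp only [freeRackLift, ha, hb, hg, map_mul, map_zpow, Equiv.Perm.mul_apply]
  rw [Equiv.Perm.zpow_apply_eq_self_of_apply_eq_self (by rw [freeAct_of, hfix])]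

end PointedRack

/-- The free pointed rack on a pointed set `(X, p)`: the free rack operation on
`F(X) × X` descends to the quotient by `pointedRel p`, the class of `(e, p)` is
a base-point, and the quotient satisfies the universal property of the free
pointed rack. -/
theorem stmt_17 {X : Type*} (p : X) :
    ∃ qop : Quot (pointedRel p) → Quot (pointedRel p) → Quot (pointedRel p),
      (∀ a b : FreeGroup X × X,
        qop (Quot.mk _ a) (Quot.mk _ b) =
          Quot.mk _ (a.1 * FreeGroup.of a.2 * a.1⁻¹ * b.1, b.2)) ∧
      qop (Quot.mk _ (1, p)) (Quot.mk _ (1, p)) = Quot.mk _ (1, p) ∧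
      (∀ (R : Type) (opR : R → R → R),
        (∀ x : R, Function.Bijective (opR x)) →
        (∀ x y z : R, opR x (opR y z) = opR (opR x y) (opR x z)) →
        ∀ q : R, opR q q = q →
        ∀ f : X → R, f p = q →
        ∃! φ : Quot (pointedRel p) → R,
          (∀ a b : Quot (pointedRel p), φ (qop a b) = opR (φ a) (φ b)) ∧
          (∀ x : X, φ (Quot.mk _ (1, x)) = f x) ∧
          φ (Quot.mk _ (1, p)) = q) := by
  refine ⟨pointedRackOp p, fun _ _ => rfl, pointedRackOp_basepoint p, ?_⟩
  intro R op hbij hdist q hq f hf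
  subst hf
  refine ⟨Quot.lift (freeRackLift op hbij f) fun _ _ => freeRackLift_eq_of_pointedRel op hbij f hq,
    ⟨?_, fun _ => ?_, ?_⟩, ?_⟩
  · rintro ⟨a⟩ ⟨b⟩
    exact freeRackLift_freeRackOp op hbij f hdist a b
  · simp [freeRackLift]
  · simp [freeRackLift]
  · rintro φ ⟨hφ, hgen, -⟩
    funext a
    induction a using Quot.ind with | _ a =>
    have hφ' a b : φ (Quot.mk _ (freeRackOp a b)) = op (φ (Quot.mk _ a)) (φ (Quot.mk _ b)) :=
      hφ (Quot.mk _ a) (Quot.mk _ b)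
    exact congrFun (freeRackLift_unique op hbij f (φ ∘ Quot.mk _) hφ' hgen) a
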